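/- Let E be a convex SEA in which every element is simple. Then every a∈E has a unique reduced representation, i.e., if a=⊕_{i=1}^n μ_i p_i=⊕_{j=1}^m ν_j q_j with sharp elements p_i (resp. q_j) satisfying ⊕_i p_i=1, ⊕_j q_j=1 and coefficients μ_1<…<μ_n, ν_1<…<ν_m in [0,1], then n=m, μ_i=ν_i and p_i=q_i for all i. -/

import Mathlib

universe u

/-- An effect algebra: the partially defined sum `⊕` is encoded via `Option`. -/
class EffectAlgebra (E : Type u) where
  oplus : E → E → Option E
  zero : E
  one : E
  oplus_comm : ∀ a b : E, oplus a b = oplus b a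
  oplus_assoc : ∀ {a b c ab abc : E}, oplus a b = some ab → oplus ab c = some abc →
    ∃ bc : E, oplus b c = some bc ∧ oplus a bc = some abc
  exists_perp : ∀ a : E, ∃ b : E, oplus a b = some one
  perp_unique : ∀ {a b c : E}, oplus a b = some one → oplus a c = some one → b = c
  oplus_one : ∀ {a b : E}, oplus a one = some b → a = zero

namespace EffectAlgebra

variable {E : Type u} [EffectAlgebra E]

/-- The orthosupplement `a^⊥`. -/
noncomputable def perp (a : E) : E := Classical.choose (exists_perp a)

/-- The partial order: `a ≤ b` iff `a ⊕ c = b` for some `c`. -/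
def le (a b : E) : Prop := ∃ c : E, oplus a c = some b

/-- Sharp elements. -/
def Sharp (a : E) : Prop := ∀ x : E, le x a → le x (perp a) → x = zero

/-- Finite orthosums of lists of elements. -/
def osum : List E → Option E
  | [] => some zero
  | a :: l => (osum l).bind fun s => oplus a s

/-- Mackey compatibility `a ↔ b`. -/
def MCompat (a b : E) : Prop :=
  ∃ a₁ b₁ c s t : E, oplus a₁ b₁ = some s ∧ oplus s c = some t ∧
    oplus a₁ c = some a ∧ oplus b₁ c = some b

/-- `a` is the supremum of the sequence `f`. -/
def IsSupSeq (f : ℕ → E) (a : E) : Prop :=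
  (∀ n, le (f n) a) ∧ ∀ b : E, (∀ n, le (f n) b) → le a b

/-- `a` is the infimum of the sequence `f`. -/
def IsInfSeq (f : ℕ → E) (a : E) : Prop :=
  (∀ n, le a (f n)) ∧ ∀ b : E, (∀ n, le b (f n)) → le b a

/-- `a` is the infimum of the set `S`. -/
def IsInfSet (S : Set E) (a : E) : Prop :=
  (∀ x ∈ S, le a x) ∧ ∀ b : E, (∀ x ∈ S, le b x) → le b a

/-- `a` is the supremum of `f` computed inside the subset `S`. -/
def IsSupSeqIn (S : Set E) (f : ℕ → E) (a : E) : Prop :=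
  a ∈ S ∧ (∀ n, le (f n) a) ∧ ∀ b ∈ S, (∀ n, le (f n) b) → le a b

variable (E) in
/-- Monotone σ-completeness: every ascending sequence has a supremum. -/
def MonotoneSigmaComplete : Prop :=
  ∀ f : ℕ → E, (∀ n, le (f n) (f (n + 1))) → ∃ a : E, IsSupSeq f a

end EffectAlgebra

open EffectAlgebra in
/-- A compression base `(J_p)_{p ∈ P}` on an effect algebra. -/
structure CompressionBase (E : Type u) [EffectAlgebra E] where
  P : Set E
  J : E → E → E
  zero_mem : zero ∈ P
  one_mem : one ∈ P
  perp_mem : ∀ p ∈ P, perp p ∈ P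
  oplus_mem : ∀ p ∈ P, ∀ q ∈ P, ∀ r : E, oplus p q = some r → r ∈ P
  normal : ∀ e f d s t x y : E, oplus e f = some s → oplus s d = some t →
    oplus e d = some x → x ∈ P → oplus f d = some y → y ∈ P → d ∈ P
  additive : ∀ p ∈ P, ∀ a b c : E, oplus a b = some c →
    oplus (J p a) (J p b) = some (J p c)
  retraction : ∀ p ∈ P, ∀ a : E, le a p → J p a = a
  focus : ∀ p ∈ P, J p one = p
  compression : ∀ p ∈ P, ∀ a : E, (J p a = zero ↔ le a (perp p))
  compose : ∀ p ∈ P, ∀ q ∈ P, ∀ r ∈ P, ∀ s t qr : E,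
    oplus p q = some s → oplus s r = some t → oplus q r = some qr →
    ∀ a : E, J s (J qr a) = J q a

namespace CompressionBase

open EffectAlgebra

variable {E : Type u} [EffectAlgebra E] (cb : CompressionBase E)

/-- The commutant `C(p)` of a projection `p`. -/
noncomputable def Cset (p : E) : Set E :=
  {a : E | oplus (cb.J p a) (cb.J (perp p) a) = some a}

/-- `PC(a)`: projections compatible with `a`. -/
noncomputable def PC (a : E) : Set E := {p : E | p ∈ cb.P ∧ a ∈ cb.Cset p}

/-- The P-bicommutant `P(a) = PC(PC(a) ∪ {a})`. -/
noncomputable def Pbicomm (a : E) : Set E :=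
  {p : E | p ∈ cb.P ∧ a ∈ cb.Cset p ∧ ∀ q ∈ cb.PC a, q ∈ cb.Cset p}

/-- `p` is the projection cover of `a`. -/
def IsProjCover (a p : E) : Prop :=
  p ∈ cb.P ∧ ∀ q ∈ cb.P, (le a q ↔ le p q)

/-- The projection cover property. -/
def ProjCoverProp : Prop := ∀ a : E, ∃ p : E, cb.IsProjCover a p

/-- `B` is a Boolean subalgebra of the set of projections. -/
noncomputable def BooleanSub (B : Set E) : Prop :=
  B ⊆ cb.P ∧ zero ∈ B ∧ one ∈ B ∧ (∀ p ∈ B, perp p ∈ B) ∧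
  (∀ p ∈ B, ∀ q ∈ B, MCompat p q) ∧
  (∀ p ∈ B, ∀ q ∈ B, ∀ r : E, oplus p q = some r → r ∈ B)

/-- The b-property. -/
noncomputable def BProperty : Prop :=
  ∀ a : E, ∃ B : Set E, cb.BooleanSub B ∧
    ∀ p ∈ cb.P, (a ∈ cb.Cset p ↔ ∀ b ∈ B, b ∈ cb.Cset p)

/-- Commutativity `aCb` of b-elements. -/
noncomputable def CommuteC (a b : E) : Prop :=
  ∀ p ∈ cb.Pbicomm a, ∀ q ∈ cb.Pbicomm b, MCompat p q

/-- The b-comparability property. -/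
noncomputable def BComparability : Prop :=
  cb.BProperty ∧
  ∀ e f : E, cb.CommuteC e f → ∃ p : E, p ∈ cb.Pbicomm e ∧ p ∈ cb.Pbicomm f ∧
    le (cb.J p e) (cb.J p f) ∧ le (cb.J (perp p) f) (cb.J (perp p) e)

/-- Spectrality: projection cover property plus b-comparability. -/
noncomputable def Spectral : Prop := cb.ProjCoverProp ∧ cb.BComparability

/-- `p` is the floor of `a` (the largest projection below `a`). -/
def IsFloor (a p : E) : Prop :=
  p ∈ cb.P ∧ le p a ∧ ∀ q ∈ cb.P, le q a → le q p

end CompressionBase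

open EffectAlgebra in
/-- A sequential effect algebra (SEA). -/
class SEA (E : Type u) [EffectAlgebra E] where
  seq : E → E → E
  seq_oplus : ∀ a b c d : E, oplus b c = some d →
    oplus (seq a b) (seq a c) = some (seq a d)
  one_seq : ∀ a : E, seq one a = a
  seq_zero_symm : ∀ a b : E, seq a b = zero → seq b a = zero
  comm_perp : ∀ a b : E, seq a b = seq b a → seq a (perp b) = seq (perp b) a
  comm_assoc : ∀ a b c : E, seq a b = seq b a → seq a (seq b c) = seq (seq a b) c
  comm_seq : ∀ a b c : E, seq c a = seq a c → seq c b = seq b c →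
    seq c (seq a b) = seq (seq a b) c
  comm_oplus : ∀ a b c d : E, seq c a = seq a c → seq c b = seq b c →
    oplus a b = some d → seq c d = seq d c

namespace EffectAlgebra

variable {E : Type u} [EffectAlgebra E]

section SEAdefs

variable [SEA E]

/-- `a | b` : the sequential product commutes. -/
def Commutes (a b : E) : Prop := SEA.seq a b = SEA.seq b a

/-- The commutant `S'` of a subset. -/
def commutant (S : Set E) : Set E := {a : E | ∀ s ∈ S, Commutes a s}

/-- The bicommutant `S''`. -/
def bicommutant (S : Set E) : Set E := commutant (commutant S)

/-- A sub-SEA: a sub-effect algebra closed under the sequential product. -/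
noncomputable def SubSEA (S : Set E) : Prop :=
  zero ∈ S ∧ one ∈ S ∧ (∀ a ∈ S, perp a ∈ S) ∧
  (∀ a ∈ S, ∀ b ∈ S, ∀ c : E, oplus a b = some c → c ∈ S) ∧
  (∀ a ∈ S, ∀ b ∈ S, SEA.seq a b ∈ S)

/-- A commutative sub-SEA. -/
noncomputable def CommSubSEA (S : Set E) : Prop :=
  SubSEA S ∧ ∀ a ∈ S, ∀ b ∈ S, Commutes a b

/-- A maximal commutative sub-SEA. -/
noncomputable def MaxCommSubSEA (S : Set E) : Prop :=
  CommSubSEA S ∧ ∀ T : Set E, CommSubSEA T → S ⊆ T → T = S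

/-- `C(p)` for the canonical compression base `J_p = p ∘ ·` of a SEA. -/
noncomputable def sC (p : E) : Set E :=
  {a : E | oplus (SEA.seq p a) (SEA.seq (perp p) a) = some a}

/-- `PC(a)` for the canonical compression base. -/
noncomputable def sPC (a : E) : Set E := {p : E | Sharp p ∧ a ∈ sC p}

/-- The P-bicommutant `P(a)` for the canonical compression base. -/
noncomputable def sPbicomm (a : E) : Set E :=
  {p : E | Sharp p ∧ a ∈ sC p ∧ ∀ q ∈ sPC a, q ∈ sC p}

/-- `p` is the projection cover of `a` (canonical compression base). -/
noncomputable def sIsProjCover (a p : E) : Prop :=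
  Sharp p ∧ ∀ q : E, Sharp q → (le a q ↔ le p q)

variable (E) in
/-- The projection cover property (canonical compression base). -/
noncomputable def sProjCoverProp : Prop := ∀ a : E, ∃ p : E, sIsProjCover a p

/-- `B` is a Boolean subalgebra of the sharp elements. -/
noncomputable def sBooleanSub (B : Set E) : Prop :=
  (∀ p ∈ B, Sharp p) ∧ zero ∈ B ∧ one ∈ B ∧ (∀ p ∈ B, perp p ∈ B) ∧
  (∀ p ∈ B, ∀ q ∈ B, MCompat p q) ∧
  (∀ p ∈ B, ∀ q ∈ B, ∀ r : E, oplus p q = some r → r ∈ B)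

variable (E) in
/-- The b-property (canonical compression base). -/
noncomputable def sBProperty : Prop :=
  ∀ a : E, ∃ B : Set E, sBooleanSub B ∧
    ∀ p : E, Sharp p → (a ∈ sC p ↔ ∀ b ∈ B, b ∈ sC p)

/-- `aCb` (canonical compression base). -/
noncomputable def sCommuteC (a b : E) : Prop :=
  ∀ p ∈ sPbicomm a, ∀ q ∈ sPbicomm b, MCompat p q

variable (E) in
/-- The b-comparability property (canonical compression base). -/
noncomputable def sBComparability : Prop :=
  sBProperty E ∧
  ∀ e f : E, sCommuteC e f → ∃ p : E, p ∈ sPbicomm e ∧ p ∈ sPbicomm f ∧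
    le (SEA.seq p e) (SEA.seq p f) ∧
    le (SEA.seq (perp p) f) (SEA.seq (perp p) e)

variable (E) in
/-- Spectrality of a SEA with respect to its canonical compression base. -/
noncomputable def sSpectral : Prop := sProjCoverProp E ∧ sBComparability E

/-- `p` is the floor of `a` (canonical compression base). -/
noncomputable def sIsFloor (a p : E) : Prop :=
  Sharp p ∧ le p a ∧ ∀ q : E, Sharp q → le q a → le q p

variable (E) in
/-- Property A. -/
def PropertyA : Prop :=
  ∀ (f : ℕ → E) (a b : E), (∀ n, le (f n) (f (n + 1))) →
    (∀ m n, Commutes (f m) (f n)) → IsSupSeq f a →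
    (∀ n, Commutes (f n) b) → Commutes a b

variable (E) in
/-- A σ-SEA. -/
def SigmaSEA : Prop :=
  MonotoneSigmaComplete E ∧
  ∀ (f : ℕ → E) (m : E), (∀ n, le (f (n + 1)) (f n)) → IsInfSeq f m →
    ∀ b : E, IsInfSeq (fun n => SEA.seq b (f n)) (SEA.seq b m) ∧
      ((∀ n, Commutes b (f n)) → Commutes b m)

/-- Iterated sequential powers: `seqPow a n = a^(n+1)`. -/
def seqPow (a : E) : ℕ → E
  | 0 => a
  | n + 1 => SEA.seq a (seqPow a n)

end SEAdefs

end EffectAlgebra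

open EffectAlgebra in
/-- A convex effect algebra: scalar multiplication by reals in `[0,1]`. -/
class ConvexEA (E : Type u) [EffectAlgebra E] where
  smul : ℝ → E → E
  smul_smul : ∀ (l m : ℝ) (a : E), 0 ≤ l → l ≤ 1 → 0 ≤ m → m ≤ 1 →
    smul m (smul l a) = smul (l * m) a
  smul_add_coeff : ∀ (l m : ℝ) (a : E), 0 ≤ l → 0 ≤ m → l + m ≤ 1 →
    oplus (smul l a) (smul m a) = some (smul (l + m) a)
  smul_oplus : ∀ (l : ℝ) (a b c : E), 0 ≤ l → l ≤ 1 → oplus a b = some c →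
    oplus (smul l a) (smul l b) = some (smul l c)
  one_smul : ∀ a : E, smul 1 a = a

namespace EffectAlgebra

variable {E : Type u} [EffectAlgebra E]

section Convexdefs

variable [ConvexEA E]

variable (E) in
/-- Strong archimedeanity. -/
def StronglyArchimedean : Prop :=
  ∀ a b c : E,
    (∀ n : ℕ, ∃ d : E, oplus b (ConvexEA.smul (1 / (n + 1) : ℝ) c) = some d ∧ le a d) →
    le a b

/-- `DistLE a b ε` encodes `‖a - b‖ ≤ ε` in the order unit norm:
`(1/2)a ≤ (1/2)b ⊕ (ε/2)1` and symmetrically (with `ε` clamped to `[0,1]`). -/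
def DistLE (a b : E) (ε : ℝ) : Prop :=
  (∃ d : E, oplus (ConvexEA.smul (2⁻¹ : ℝ) b) (ConvexEA.smul (min ε 1 / 2) one) = some d ∧
    le (ConvexEA.smul (2⁻¹ : ℝ) a) d) ∧
  (∃ d : E, oplus (ConvexEA.smul (2⁻¹ : ℝ) a) (ConvexEA.smul (min ε 1 / 2) one) = some d ∧
    le (ConvexEA.smul (2⁻¹ : ℝ) b) d)

/-- Norm convergence of a sequence. -/
def NormLimit (f : ℕ → E) (a : E) : Prop :=
  ∀ ε : ℝ, 0 < ε → ∃ N : ℕ, ∀ n ≥ N, DistLE (f n) a ε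

/-- Cauchy sequences with respect to the order unit norm. -/
def CauchySeqE (f : ℕ → E) : Prop :=
  ∀ ε : ℝ, 0 < ε → ∃ N : ℕ, ∀ m ≥ N, ∀ n ≥ N, DistLE (f m) (f n) ε

variable (E) in
/-- Norm completeness. -/
def NormComplete : Prop := ∀ f : ℕ → E, CauchySeqE f → ∃ a : E, NormLimit f a

/-- A norm-closed subset. -/
def NormClosedSet (S : Set E) : Prop :=
  ∀ (f : ℕ → E) (a : E), (∀ n, f n ∈ S) → NormLimit f a → a ∈ S

/-- A norm-complete subset. -/
def NormCompleteSet (S : Set E) : Prop :=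
  ∀ f : ℕ → E, (∀ n, f n ∈ S) → CauchySeqE f → ∃ a ∈ S, NormLimit f a

/-- One-dimensional elements. -/
def OneDim (a : E) : Prop :=
  ∀ b : E, le b a → ∃ t : ℝ, 0 ≤ t ∧ t ≤ 1 ∧ b = ConvexEA.smul t a

/-- `l` is a representation of `a` as a simple element:
`a = ⊕ μ_i p_i` with `μ_i ∈ [0,1]`, `p_i` sharp and `⊕ p_i = 1`. -/
noncomputable def SimpleRep (a : E) (l : List (ℝ × E)) : Prop :=
  (∀ x ∈ l, x.1 ∈ Set.Icc (0 : ℝ) 1 ∧ Sharp x.2) ∧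
  osum (l.map Prod.snd) = some one ∧
  osum (l.map fun x => ConvexEA.smul x.1 x.2) = some a

/-- Simple elements. -/
noncomputable def SimpleElem (a : E) : Prop := ∃ l : List (ℝ × E), SimpleRep a l

/-- A reduced representation: strictly increasing coefficients, nonzero sharp elements. -/
noncomputable def ReducedRep (a : E) (l : List (ℝ × E)) : Prop :=
  SimpleRep a l ∧ (l.map Prod.fst).Chain' (· < ·) ∧ ∀ x ∈ l, x.2 ≠ zero

end Convexdefs

section SpecRes

variable [SEA E] [ConvexEA E]

/-- `p` is the spectral resolution of `a` (canonical compression base): a family of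
projections in the bicommutant of `a`, nondecreasing and right continuous on `[0,1]`,
with `J_{p_λ}(a) ≤ λ p_λ` and `λ p_λ^⊥ ≤ J_{p_λ^⊥}(a)`. -/
noncomputable def sIsSpecRes (a : E) (p : ℝ → E) : Prop :=
  (∀ l : ℝ, 0 ≤ l → l ≤ 1 → p l ∈ sPbicomm a) ∧
  (∀ l m : ℝ, 0 ≤ l → l ≤ m → m ≤ 1 → le (p l) (p m)) ∧
  (∀ l : ℝ, 0 ≤ l → l < 1 →
    IsInfSet {x : E | ∃ m : ℝ, l < m ∧ m ≤ 1 ∧ x = p m} (p l)) ∧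
  (∀ l : ℝ, 0 ≤ l → l ≤ 1 →
    le (SEA.seq (p l) a) (ConvexEA.smul l (p l)) ∧
    le (ConvexEA.smul l (perp (p l))) (SEA.seq (perp (p l)) a))

end SpecRes

end EffectAlgebra

namespace CompressionBase

open EffectAlgebra

variable {E : Type u} [EffectAlgebra E] [ConvexEA E] (cb : CompressionBase E)

/-- `p` is the spectral resolution of `a` with respect to the compression base `cb`. -/
noncomputable def IsSpecRes (a : E) (p : ℝ → E) : Prop :=
  (∀ l : ℝ, 0 ≤ l → l ≤ 1 → p l ∈ cb.Pbicomm a) ∧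
  (∀ l m : ℝ, 0 ≤ l → l ≤ m → m ≤ 1 → le (p l) (p m)) ∧
  (∀ l : ℝ, 0 ≤ l → l < 1 →
    IsInfSet {x : E | ∃ m : ℝ, l < m ∧ m ≤ 1 ∧ x = p m} (p l)) ∧
  (∀ l : ℝ, 0 ≤ l → l ≤ 1 →
    le (cb.J (p l) a) (ConvexEA.smul l (p l)) ∧
    le (ConvexEA.smul l (perp (p l))) (cb.J (perp (p l)) a))

end CompressionBase

/-!
Work relative to a sharp element `s` in place of `1`. The head coefficient `μ` of a reduced
representation of `a` is the largest `ν` with `ν s ≤ a`, so two representations share it. If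
their heads are `p, q` with `p ⊕ t₁ = q ⊕ t₂ = s`, comparing the representations gives
`ε t₁ ≤ (1 - μ) t₂ ≤ q^⊥` for some `ε > 0`, hence `q ∘ t₁ = 0`, and symmetrically `p ∘ t₂ = 0`;
in a SEA this forces `p = q`. The tails are then reduced representations relative to the sharp
element `t₁ = t₂`, and induction on the length finishes.
-/

namespace EffectAlgebra

variable {E : Type*} [EffectAlgebra E] {a b c d s t : E}

theorem oplus_perp (a : E) : oplus a (perp a) = some one :=
  Classical.choose_spec (exists_perp a)

theorem perp_eq_of_oplus_eq_one (h : oplus a b = some one) : perp a = b :=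
  perp_unique (oplus_perp a) h

theorem perp_perp (a : E) : perp (perp a) = a :=
  perp_eq_of_oplus_eq_one (by rw [oplus_comm]; exact oplus_perp a)

theorem oplus_left_cancel (h₁ : oplus a b = some d) (h₂ : oplus a c = some d) : b = c := by
  rw [oplus_comm] at h₁ h₂
  obtain ⟨f, hf, hbf⟩ := oplus_assoc h₁ (oplus_perp d)
  obtain ⟨g, hg, hcg⟩ := oplus_assoc h₂ (oplus_perp d)
  obtain rfl : f = g := Option.some.inj (hf.symm.trans hg)
  rw [oplus_comm] at hbf hcg
  exact perp_unique hbf hcg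

theorem perp_one : perp (one : E) = zero :=
  oplus_one (by rw [oplus_comm]; exact oplus_perp one)

theorem oplus_zero (a : E) : oplus a zero = some a := by
  have h₁ : oplus (perp a) a = some one := by rw [oplus_comm]; exact oplus_perp a
  have h₂ : oplus (one : E) zero = some one := perp_one (E := E) ▸ oplus_perp one
  obtain ⟨b, hab, hb⟩ := oplus_assoc h₁ h₂
  obtain rfl := perp_unique h₁ hb
  exact hab

theorem zero_oplus (a : E) : oplus zero a = some a := by
  rw [oplus_comm]; exact oplus_zero a

theorem eq_zero_of_oplus_eq_zero (h : oplus a b = some zero) : a = zero := by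
  obtain ⟨f, hf, -⟩ := oplus_assoc h (zero_oplus one)
  obtain rfl : b = zero := oplus_one hf
  exact Option.some.inj ((oplus_zero a).symm.trans h)

theorem oplus_assoc_left (h₁ : oplus b c = some t) (h₂ : oplus a t = some s) :
    ∃ u, oplus a b = some u ∧ oplus u c = some s := by
  rw [oplus_comm] at h₁ h₂
  obtain ⟨u, hu, hus⟩ := oplus_assoc h₁ h₂
  exact ⟨u, by rwa [oplus_comm], by rwa [oplus_comm]⟩

theorem le.refl (a : E) : le a a := ⟨zero, oplus_zero a⟩

theorem le.trans (h₁ : le a b) (h₂ : le b c) : le a c := by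
  obtain ⟨u, hu⟩ := h₁
  obtain ⟨v, hv⟩ := h₂
  obtain ⟨w, -, hw⟩ := oplus_assoc hu hv
  exact ⟨w, hw⟩

theorem le_one (a : E) : le a one := ⟨perp a, oplus_perp a⟩

theorem eq_zero_of_le_zero (h : le a zero) : a = zero := by
  obtain ⟨c, hc⟩ := h
  exact eq_zero_of_oplus_eq_zero hc

theorem le_of_oplus_le_oplus {u v : E} (hu : oplus a b = some u) (hv : oplus a c = some v)
    (h : le u v) : le b c := by
  obtain ⟨d, hd⟩ := h
  obtain ⟨e, hbe, hae⟩ := oplus_assoc hu hd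
  obtain rfl : e = c := oplus_left_cancel hae hv
  exact ⟨d, hbe⟩

theorem le_perp_of_oplus (h : oplus a b = some c) : le b (perp a) :=
  le_of_oplus_le_oplus h (oplus_perp a) (le_one c)

theorem exists_oplus_le_of_le_left {a' : E} (ha : le a a') (h : oplus a' b = some s) :
    ∃ t, oplus a b = some t ∧ le t s := by
  obtain ⟨u, hu⟩ := ha
  obtain ⟨v, hub, hv⟩ := oplus_assoc hu h
  rw [oplus_comm] at hub
  obtain ⟨t, hab, ht⟩ := oplus_assoc_left hub hv
  exact ⟨t, hab, u, ht⟩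

theorem exists_oplus_le_of_le_right {b' : E} (hb : le b b') (h : oplus a b' = some s) :
    ∃ t, oplus a b = some t ∧ le t s := by
  rw [oplus_comm] at h
  obtain ⟨t, hba, ht⟩ := exists_oplus_le_of_le_left hb h
  exact ⟨t, by rwa [oplus_comm], ht⟩

theorem exists_oplus_le_of_le {a' b' : E} (ha : le a a') (hb : le b b')
    (h : oplus a' b' = some s) : ∃ t, oplus a b = some t ∧ le t s := by
  obtain ⟨u, hu, hus⟩ := exists_oplus_le_of_le_right hb h
  obtain ⟨t, ht, htu⟩ := exists_oplus_le_of_le_left ha hu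
  exact ⟨t, ht, htu.trans hus⟩

theorem osum_cons_eq_some {l : List E} :
    osum (a :: l) = some s ↔ ∃ t, osum l = some t ∧ oplus a t = some s :=
  Option.bind_eq_some_iff

theorem osum_map_le {α : Type*} {l : List α} {f g : α → E} (hfg : ∀ x ∈ l, le (f x) (g x))
    (h : osum (l.map g) = some s) : ∃ t, osum (l.map f) = some t ∧ le t s := by
  induction l generalizing s with
  | nil => exact ⟨s, h, le.refl s⟩
  | cons x l ih =>
    obtain ⟨u, hu, hxu⟩ := osum_cons_eq_some.1 h
    obtain ⟨v, hv, hvu⟩ := ih (fun y hy => hfg y (List.mem_cons_of_mem x hy)) hu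
    obtain ⟨t, ht, hts⟩ := exists_oplus_le_of_le (hfg x List.mem_cons_self) hvu hxu
    exact ⟨t, osum_cons_eq_some.2 ⟨v, hv, ht⟩, hts⟩

theorem sharp_one : Sharp (one : E) := fun _ _ hx =>
  eq_zero_of_le_zero (perp_one (E := E) ▸ hx)

end EffectAlgebra

namespace ConvexEA

open EffectAlgebra

variable {E : Type*} [EffectAlgebra E] [ConvexEA E] {a b x : E} {μ ν : ℝ}

theorem smul_zero_of_mem (h₀ : 0 ≤ μ) (h₁ : μ ≤ 1) : smul μ (zero : E) = zero :=
  oplus_left_cancel (smul_oplus μ zero zero zero h₀ h₁ (oplus_zero zero)) (oplus_zero _)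

theorem oplus_smul_sub (a : E) (h₀ : 0 ≤ μ) (hμν : μ ≤ ν) (h₁ : ν ≤ 1) :
    oplus (smul μ a) (smul (ν - μ) a) = some (smul ν a) := by
  simpa using smul_add_coeff μ (ν - μ) a h₀ (by linarith) (by linarith)

theorem oplus_smul_one_sub (a : E) (h₀ : 0 ≤ μ) (h₁ : μ ≤ 1) :
    oplus (smul μ a) (smul (1 - μ) a) = some a := by
  simpa [one_smul] using oplus_smul_sub a h₀ h₁ le_rfl

theorem smul_le_smul_of_le (a : E) (h₀ : 0 ≤ μ) (hμν : μ ≤ ν) (h₁ : ν ≤ 1) :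
    le (smul μ a) (smul ν a) :=
  ⟨_, oplus_smul_sub a h₀ hμν h₁⟩

theorem smul_le_self (a : E) (h₀ : 0 ≤ μ) (h₁ : μ ≤ 1) : le (smul μ a) a :=
  ⟨_, oplus_smul_one_sub a h₀ h₁⟩

theorem smul_le_smul (h₀ : 0 ≤ μ) (h₁ : μ ≤ 1) (h : le a b) : le (smul μ a) (smul μ b) := by
  obtain ⟨d, hd⟩ := h
  exact ⟨_, smul_oplus μ a d b h₀ h₁ hd⟩

theorem eq_smul_inv_two_of_oplus_self (h : oplus x x = some a) : x = smul 2⁻¹ a := by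
  have hx := oplus_smul_one_sub x (μ := 2⁻¹) (by norm_num) (by norm_num)
  rw [show (1 : ℝ) - 2⁻¹ = 2⁻¹ by norm_num] at hx
  exact Option.some.inj (hx.symm.trans (smul_oplus 2⁻¹ x x a (by norm_num) (by norm_num) h))

-- `(1 - μ) a = a` propagates to `(1 - μ)^k a = a`, and `(1 - μ)^k < μ` for large `k`.
theorem eq_zero_of_smul_eq_zero (h₀ : 0 < μ) (h₁ : μ ≤ 1) (h : smul μ a = zero) : a = zero := by
  have hfix : smul (1 - μ) a = a := by
    simpa [h, zero_oplus] using oplus_smul_one_sub a h₀.le h₁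
  have hpow : ∀ k : ℕ, smul ((1 - μ) ^ k) a = a := by
    intro k
    induction k with
    | zero => rw [pow_zero, one_smul]
    | succ k ih =>
      rw [pow_succ, ← smul_smul _ _ a (pow_nonneg (by linarith) k)
        (pow_le_one₀ (by linarith) (by linarith)) (by linarith) (by linarith), ih, hfix]
  obtain ⟨k, hk⟩ := exists_pow_lt_of_lt_one h₀ (show 1 - μ < 1 by linarith)
  have hle := smul_le_smul_of_le a (pow_nonneg (by linarith) k) hk.le h₁
  rw [hpow k, h] at hle
  exact eq_zero_of_le_zero hle

theorem osum_map_smul {α : Type*} {l : List α} {f : α → E} {s : E} (h₀ : 0 ≤ μ) (h₁ : μ ≤ 1)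
    (h : osum (l.map f) = some s) :
    osum (l.map fun x => smul μ (f x)) = some (smul μ s) := by
  induction l generalizing s with
  | nil =>
    obtain rfl : zero = s := Option.some.inj h
    exact congrArg some (smul_zero_of_mem h₀ h₁).symm
  | cons x l ih =>
    obtain ⟨t, ht, hxt⟩ := osum_cons_eq_some.1 h
    exact osum_cons_eq_some.2 ⟨_, ih ht, smul_oplus μ _ _ _ h₀ h₁ hxt⟩

end ConvexEA

namespace SEA

open EffectAlgebra

variable {E : Type*} [EffectAlgebra E] [SEA E] {a b c : E}

theorem seq_zero (a : E) : seq a (zero : E) = zero :=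
  oplus_left_cancel (seq_oplus a zero zero zero (oplus_zero zero)) (oplus_zero _)

theorem zero_seq (a : E) : seq (zero : E) a = zero :=
  seq_zero_symm a zero (seq_zero a)

theorem seq_one (a : E) : seq a one = a := by
  have h := comm_perp a zero (by rw [seq_zero, zero_seq])
  rwa [perp_eq_of_oplus_eq_one (zero_oplus one), one_seq] at h

theorem seq_le_seq (a : E) (h : le b c) : le (seq a b) (seq a c) := by
  obtain ⟨d, hd⟩ := h
  exact ⟨_, seq_oplus a b d c hd⟩

theorem seq_le (a b : E) : le (seq a b) a := by
  simpa only [seq_one] using seq_le_seq a (le_one b)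

theorem seq_eq_zero_of_le (h : le b c) (hc : seq a c = zero) : seq a b = zero :=
  eq_zero_of_le_zero (hc ▸ seq_le_seq a h)

theorem seq_eq_self_iff_seq_perp_eq_zero : seq a b = a ↔ seq a (perp b) = zero := by
  have h := seq_oplus a b (perp b) one (oplus_perp b)
  rw [seq_one] at h
  constructor
  · intro hab
    rw [hab] at h
    exact oplus_left_cancel h (oplus_zero a)
  · intro hab
    rw [hab] at h
    exact Option.some.inj ((oplus_zero _).symm.trans h)

theorem seq_smul_inv_two [ConvexEA E] (a b : E) :
    seq a (ConvexEA.smul 2⁻¹ b) = ConvexEA.smul 2⁻¹ (seq a b) := by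
  have hb := ConvexEA.oplus_smul_one_sub b (μ := 2⁻¹) (by norm_num) (by norm_num)
  rw [show (1 : ℝ) - 2⁻¹ = 2⁻¹ by norm_num] at hb
  exact ConvexEA.eq_smul_inv_two_of_oplus_self (seq_oplus a _ _ b hb)

theorem seq_smul_inv_two_pow [ConvexEA E] (a b : E) (k : ℕ) :
    seq a (ConvexEA.smul ((2 : ℝ)⁻¹ ^ k) b) = ConvexEA.smul ((2 : ℝ)⁻¹ ^ k) (seq a b) := by
  have hpow : ∀ (k : ℕ) (x : E), ConvexEA.smul ((2 : ℝ)⁻¹ ^ (k + 1)) x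
      = ConvexEA.smul 2⁻¹ (ConvexEA.smul ((2 : ℝ)⁻¹ ^ k) x) := fun k x => by
    rw [pow_succ, ConvexEA.smul_smul _ _ x (by positivity) (pow_le_one₀ (by norm_num)
      (by norm_num)) (by norm_num) (by norm_num)]
  induction k with
  | zero => rw [pow_zero, ConvexEA.one_smul, ConvexEA.one_smul]
  | succ k ih => rw [hpow, seq_smul_inv_two, ih, ← hpow]

-- `seq a` is additive, hence commutes with dyadic scalars, and `2⁻¹ ^ k ≤ ε` for large `k`.
theorem seq_eq_zero_of_seq_smul_eq_zero [ConvexEA E] {ε : ℝ} (h₀ : 0 < ε) (h₁ : ε ≤ 1)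
    (h : seq a (ConvexEA.smul ε b) = zero) : seq a b = zero := by
  obtain ⟨k, hk⟩ := exists_pow_lt_of_lt_one h₀ (show (2 : ℝ)⁻¹ < 1 by norm_num)
  have hle := ConvexEA.smul_le_smul_of_le b (by positivity) hk.le h₁
  have hk0 := seq_eq_zero_of_le hle h
  rw [seq_smul_inv_two_pow] at hk0
  exact ConvexEA.eq_zero_of_smul_eq_zero (by positivity)
    (pow_le_one₀ (by norm_num) (by norm_num)) hk0

end SEA

namespace EffectAlgebra

open SEA

variable {E : Type*} [EffectAlgebra E] [SEA E] {a p q s t t₁ t₂ x : E}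

theorem Sharp.seq_perp_eq_zero (h : Sharp a) : seq a (perp a) = zero :=
  h _ (seq_le a _) (by rw [comm_perp a a rfl]; exact seq_le _ _)

theorem Sharp.seq_self (h : Sharp a) : seq a a = a :=
  seq_eq_self_iff_seq_perp_eq_zero.2 h.seq_perp_eq_zero

theorem sharp_of_seq_self (h : seq a a = a) : Sharp a := by
  intro x hxa hxp
  have ha := seq_eq_self_iff_seq_perp_eq_zero.1 h
  have hxa' : seq x a = zero := seq_zero_symm _ _ (seq_eq_zero_of_le hxp ha)
  have hxp' : seq x (perp a) = zero :=
    seq_zero_symm _ _ (seq_eq_zero_of_le hxa (seq_zero_symm _ _ ha))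
  rw [← seq_eq_self_iff_seq_perp_eq_zero.2 hxp', hxa']

theorem Sharp.seq_eq_self_of_le (hs : Sharp s) (h : le x s) : seq x s = x :=
  seq_eq_self_iff_seq_perp_eq_zero.2
    (seq_zero_symm _ _ (seq_eq_zero_of_le h (seq_zero_symm _ _ hs.seq_perp_eq_zero)))

theorem Sharp.seq_eq_self_of_oplus (hs : Sharp s) (hpt : oplus p t = some s) (hq : le q s)
    (hqt : seq q t = zero) : seq q p = q := by
  have h := seq_oplus q p t s hpt
  rw [hqt, hs.seq_eq_self_of_le hq] at h
  exact Option.some.inj ((oplus_zero _).symm.trans h)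

theorem Sharp.of_oplus (hs : Sharp s) (hp : Sharp p) (h : oplus p t = some s) : Sharp t := by
  have hpt : seq p t = zero := by
    have h' := seq_oplus p p t s h
    rw [hp.seq_self, hs.seq_eq_self_of_le ⟨t, h⟩] at h'
    exact oplus_left_cancel h' (oplus_zero p)
  rw [oplus_comm] at h
  exact sharp_of_seq_self (hs.seq_eq_self_of_oplus h ⟨p, h⟩ (seq_zero_symm _ _ hpt))

theorem Sharp.eq_of_oplus_of_seq_eq_zero (hs : Sharp s) (hp : oplus p t₁ = some s)
    (hq : oplus q t₂ = some s) (hqt₁ : seq q t₁ = zero) (hpt₂ : seq p t₂ = zero) : p = q := by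
  have hqp : seq q p = q := hs.seq_eq_self_of_oplus hp ⟨t₂, hq⟩ hqt₁
  have hpq : seq p q = p := hs.seq_eq_self_of_oplus hq ⟨t₁, hp⟩ hpt₂
  have hpq' := seq_eq_self_iff_seq_perp_eq_zero.1 hpq
  have hcomm := comm_perp p (perp q) (by rw [hpq', seq_zero_symm _ _ hpq'])
  rw [perp_perp] at hcomm
  rw [← hpq, hcomm, hqp]

end EffectAlgebra

namespace EffectAlgebra

open ConvexEA

variable {E : Type*} [EffectAlgebra E] [ConvexEA E]

-- `ReducedRep` with `one` replaced by `s`.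
structure ReducedRepIn (s a : E) (l : List (ℝ × E)) : Prop where
  mem_Icc : ∀ x ∈ l, x.1 ∈ Set.Icc (0 : ℝ) 1
  sharp : ∀ x ∈ l, Sharp x.2
  ne_zero : ∀ x ∈ l, x.2 ≠ zero
  pairwise_lt : l.Pairwise fun x y => x.1 < y.1
  osum_snd : osum (l.map Prod.snd) = some s
  osum_smul : osum (l.map fun x => smul x.1 x.2) = some a

theorem ReducedRep.reducedRepIn {a : E} {l : List (ℝ × E)} (h : ReducedRep a l) :
    ReducedRepIn one a l where
  mem_Icc x hx := (h.1.1 x hx).1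
  sharp x hx := (h.1.1 x hx).2
  ne_zero := h.2.2
  pairwise_lt := List.pairwise_map.1 (List.isChain_iff_pairwise.1 h.2.1)
  osum_snd := h.1.2.1
  osum_smul := h.1.2.2

namespace ReducedRepIn

variable {s a t d p q : E} {l r r₁ r₂ : List (ℝ × E)} {μ ν : ℝ}

theorem eq_zero_of_nil (h : ReducedRepIn s a []) : s = zero :=
  (Option.some.inj h.osum_snd).symm

theorem eq_nil_of_eq_zero (h : ReducedRepIn zero a l) : l = [] := by
  cases l with
  | nil => rfl
  | cons x r =>
    obtain ⟨t, -, hxt⟩ := osum_cons_eq_some.1 h.osum_snd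
    exact absurd (eq_zero_of_oplus_eq_zero hxt) (h.ne_zero x List.mem_cons_self)

theorem tail (h : ReducedRepIn s a ((μ, p) :: r)) :
    ∃ t d, ReducedRepIn t d r ∧ oplus p t = some s ∧ oplus (smul μ p) d = some a := by
  obtain ⟨t, ht, hpt⟩ := osum_cons_eq_some.1 h.osum_snd
  obtain ⟨d, hd, hpd⟩ := osum_cons_eq_some.1 h.osum_smul
  refine ⟨t, d, ⟨fun x hx => h.mem_Icc x (.tail _ hx), fun x hx => h.sharp x (.tail _ hx),
    fun x hx => h.ne_zero x (.tail _ hx), (List.pairwise_cons.1 h.pairwise_lt).2, ht, hd⟩,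
    hpt, hpd⟩

theorem head_lt (h : ReducedRepIn s a ((μ, p) :: r)) : ∀ y ∈ r, μ < y.1 :=
  (List.pairwise_cons.1 h.pairwise_lt).1

theorem le_unit (h : ReducedRepIn s a l) : le a s := by
  obtain ⟨b, hb, hbs⟩ := osum_map_le
    (fun x hx => smul_le_self x.2 (h.mem_Icc x hx).1 (h.mem_Icc x hx).2) h.osum_snd
  rwa [Option.some.inj (h.osum_smul.symm.trans hb)]

theorem smul_le (h : ReducedRepIn s a l) (hν₀ : 0 ≤ ν) (hν₁ : ν ≤ 1) (hν : ∀ x ∈ l, ν ≤ x.1) :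
    le (smul ν s) a := by
  obtain ⟨b, hb, hba⟩ := osum_map_le (f := fun x => smul ν x.2)
    (fun x hx => smul_le_smul_of_le x.2 hν₀ (hν x hx) (h.mem_Icc x hx).2) h.osum_smul
  rwa [Option.some.inj (hb.symm.trans (osum_map_smul hν₀ hν₁ h.osum_snd))] at hba

theorem smul_head_le (h : ReducedRepIn s a ((μ, p) :: r)) : le (smul μ s) a := by
  have hμ := h.mem_Icc _ List.mem_cons_self
  refine h.smul_le hμ.1 hμ.2 ?_
  rintro x (_ | ⟨_, hx⟩)
  exacts [le_rfl, (h.head_lt x hx).le]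

-- If `ν > μ`, then `(ν - μ) p` lies below the tail, which is orthogonal to the sharp `p ≠ 0`.
theorem le_head_of_smul_le (h : ReducedRepIn s a ((μ, p) :: r)) (hν₁ : ν ≤ 1)
    (hν : le (smul ν s) a) : ν ≤ μ := by
  obtain ⟨t, d, hr, hpt, hpd⟩ := h.tail
  have hμ₀ := (h.mem_Icc _ List.mem_cons_self).1
  by_contra! hμν
  have hνp : le (smul ν p) a := (smul_le_smul (by linarith) hν₁ ⟨t, hpt⟩).trans hν
  have hd : le (smul (ν - μ) p) d :=
    le_of_oplus_le_oplus (oplus_smul_sub p hμ₀ hμν.le hν₁) hpd hνp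
  have hzero := h.sharp _ List.mem_cons_self _ (smul_le_self p (by linarith) (by linarith))
    ((hd.trans hr.le_unit).trans (le_perp_of_oplus hpt))
  exact h.ne_zero _ List.mem_cons_self
    (eq_zero_of_smul_eq_zero (by linarith) (by linarith) hzero)

theorem exists_gap (hr : ReducedRepIn t d r) (hμ : μ ∈ Set.Icc (0 : ℝ) 1)
    (hμr : ∀ y ∈ r, μ < y.1) (hpt : oplus p t = some s) (hpd : oplus (smul μ p) d = some a) :
    ∃ ε : ℝ, 0 < ε ∧ ε ≤ 1 ∧ ∃ b, oplus (smul μ s) (smul ε t) = some b ∧ le b a := by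
  cases r with
  | nil =>
    obtain rfl := hr.eq_zero_of_nil
    obtain rfl : zero = d := Option.some.inj hr.osum_smul
    obtain rfl : p = s := Option.some.inj ((oplus_zero p).symm.trans hpt)
    refine ⟨1, one_pos, le_rfl, _, ?_, zero, hpd⟩
    rw [ConvexEA.one_smul]
    exact oplus_zero _
  | cons y r =>
    obtain ⟨ν, q⟩ := y
    have hμν : μ < ν := hμr _ List.mem_cons_self
    have hν₁ : ν ≤ 1 := (hr.mem_Icc _ List.mem_cons_self).2
    obtain ⟨b, hb, hba⟩ := exists_oplus_le_of_le_right hr.smul_head_le hpd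
    obtain ⟨c, hc, hcb⟩ := oplus_assoc_left (oplus_smul_sub t hμ.1 hμν.le hν₁) hb
    rw [← Option.some.inj ((smul_oplus μ p t s hμ.1 hμ.2 hpt).symm.trans hc)] at hcb
    exact ⟨ν - μ, by linarith, by linarith [hμ.1], b, hcb, hba⟩

theorem exists_le_smul_oplus (hd : le d t) (hμ : μ ∈ Set.Icc (0 : ℝ) 1)
    (hqt : oplus q t = some s) (hqd : oplus (smul μ q) d = some a) :
    ∃ b, oplus (smul μ s) (smul (1 - μ) t) = some b ∧ le a b := by
  obtain ⟨b, hb, -⟩ := exists_oplus_le_of_le_left (smul_le_self q hμ.1 hμ.2) hqt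
  obtain ⟨c, hc, hcb⟩ := exists_oplus_le_of_le_right hd hb
  obtain ⟨e, he, heb⟩ := oplus_assoc_left (oplus_smul_one_sub t hμ.1 hμ.2) hb
  rw [← Option.some.inj ((smul_oplus μ q t s hμ.1 hμ.2 hqt).symm.trans he)] at heb
  exact ⟨b, heb, Option.some.inj (hc.symm.trans hqd) ▸ hcb⟩

theorem seq_tail_eq_zero [SEA E] {t₁ : E} (h₁ : ReducedRepIn s a ((μ, p) :: r₁))
    (h₂ : ReducedRepIn s a ((μ, q) :: r₂)) (ht₁ : osum (r₁.map Prod.snd) = some t₁) :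
    SEA.seq q t₁ = zero := by
  obtain ⟨t, d₁, hr₁, hpt₁, hpd₁⟩ := h₁.tail
  obtain rfl : t = t₁ := Option.some.inj (hr₁.osum_snd.symm.trans ht₁)
  obtain ⟨t₂, d₂, hr₂, hqt₂, hqd₂⟩ := h₂.tail
  have hμ : μ ∈ Set.Icc (0 : ℝ) 1 := h₁.mem_Icc _ List.mem_cons_self
  obtain ⟨ε, hε₀, hε₁, b, hb, hba⟩ := hr₁.exists_gap hμ h₁.head_lt hpt₁ hpd₁
  obtain ⟨c, hc, hac⟩ := exists_le_smul_oplus hr₂.le_unit hμ hqt₂ hqd₂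
  have hεt : le (smul ε t) (perp q) :=
    ((le_of_oplus_le_oplus hb hc (hba.trans hac)).trans
      (smul_le_self t₂ (by linarith [hμ.2]) (by linarith [hμ.1]))).trans (le_perp_of_oplus hqt₂)
  exact SEA.seq_eq_zero_of_seq_smul_eq_zero hε₀ hε₁
    (SEA.seq_eq_zero_of_le hεt (h₂.sharp _ List.mem_cons_self).seq_perp_eq_zero)

theorem head_eq [SEA E] (hs : Sharp s) (h₁ : ReducedRepIn s a ((μ, p) :: r₁))
    (h₂ : ReducedRepIn s a ((ν, q) :: r₂)) : μ = ν ∧ p = q := by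
  obtain rfl : μ = ν := le_antisymm
    (h₂.le_head_of_smul_le (h₁.mem_Icc _ List.mem_cons_self).2 h₁.smul_head_le)
    (h₁.le_head_of_smul_le (h₂.mem_Icc _ List.mem_cons_self).2 h₂.smul_head_le)
  obtain ⟨t₁, _, hr₁, hpt₁, -⟩ := h₁.tail
  obtain ⟨t₂, _, hr₂, hqt₂, -⟩ := h₂.tail
  exact ⟨rfl, hs.eq_of_oplus_of_seq_eq_zero hpt₁ hqt₂ (h₁.seq_tail_eq_zero h₂ hr₁.osum_snd)
    (h₂.seq_tail_eq_zero h₁ hr₂.osum_snd)⟩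

theorem unique [SEA E] {l₁ l₂ : List (ℝ × E)} (hs : Sharp s) (h₁ : ReducedRepIn s a l₁)
    (h₂ : ReducedRepIn s a l₂) : l₁ = l₂ := by
  induction l₁ generalizing s a l₂ with
  | nil =>
    obtain rfl := h₁.eq_zero_of_nil
    exact h₂.eq_nil_of_eq_zero.symm
  | cons x r₁ ih =>
    cases l₂ with
    | nil =>
      obtain rfl := h₂.eq_zero_of_nil
      exact h₁.eq_nil_of_eq_zero
    | cons y r₂ =>
      obtain ⟨μ, p⟩ := x
      obtain ⟨ν, q⟩ := y
      obtain ⟨rfl, rfl⟩ := head_eq hs h₁ h₂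
      obtain ⟨t₁, d₁, hr₁, hpt₁, hpd₁⟩ := h₁.tail
      obtain ⟨t₂, d₂, hr₂, hpt₂, hpd₂⟩ := h₂.tail
      obtain rfl := oplus_left_cancel hpt₁ hpt₂
      obtain rfl := oplus_left_cancel hpd₁ hpd₂
      rw [ih (hs.of_oplus (h₁.sharp _ List.mem_cons_self) hpt₁) hr₁ hr₂]

end ReducedRepIn

end EffectAlgebra

open EffectAlgebra in
theorem stmt18_general {E : Type u} [EffectAlgebra E] [SEA E] [ConvexEA E] :
    ∀ (a : E) (l₁ l₂ : List (ℝ × E)), ReducedRep a l₁ → ReducedRep a l₂ → l₁ = l₂ :=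
  fun _ _ _ h₁ h₂ => h₁.reducedRepIn.unique sharp_one h₂.reducedRepIn

open EffectAlgebra in
/-- in a convex SEA in which every element is simple, reduced
representations are unique. -/
theorem stmt18 {E : Type u} [EffectAlgebra E] [SEA E] [ConvexEA E]
    (hsimple : ∀ a : E, SimpleElem a) :
    ∀ (a : E) (l₁ l₂ : List (ℝ × E)), ReducedRep a l₁ → ReducedRep a l₂ → l₁ = l₂ :=
  stmt18_general
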